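/- Let ω be a nonnegative integrable function on [0,1) with ŵ(r) = ∫_r^1 ω(s) ds > 0 for all r. Suppose there exist C' ≥ 1 and β > 0 with ŵ(r) ≤ C'·((1-r)/(1-t))^β·ŵ(t) for all 0 ≤ r ≤ t < 1. Then there exist constants c₁, c₂ > 0 such that c₁·ŵ(1 - 1/x) ≤ ∫_0^1 s^x ω(s) ds ≤ c₂·ŵ(1 - 1/x) for all x ∈ [1, ∞). -/

import Mathlib

open MeasureTheory Set

/-- The tail integral of a radial weight. -/
noncomputable def tl (ω : ℝ → ℝ) (r : ℝ) : ℝ := ∫ s in r..1, ω s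

/-!
Write `ŵ = tl ω` and `a = 1 - 1/x`. For the lower bound, with `b = 1 - 1/(2x)` the moment is at
least `b^x ŵ(b) ≥ ŵ(b)/2` by Bernoulli's inequality, and the hypothesis with
`(1 - a)/(1 - b) = 2` compares `ŵ(b)` with `ŵ(a)`. For the upper bound, Fubini gives
`∫ s^x ω(s) ds = ∫ x u^(x-1) ŵ(u) du`. The hypothesis gives `ŵ(u) ≤ C (x(1-u))^β ŵ(a)` for
`u ≤ a`, monotonicity gives `ŵ(u) ≤ ŵ(a)` beyond `a`, and `u^(x-1) ≤ e · e^(-x(1-u))`; after the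
substitution `v = x(1-u)` what remains is at most `∫₀^∞ e^(-v) (v^β + 1) dv = Γ(β+1) + 1`.
-/

theorem intervalIntegral.integral_primitive_mul_eq {f g : ℝ → ℝ} {a b : ℝ} (hab : a ≤ b)
    (hf : IntervalIntegrable f volume a b) (hg : IntervalIntegrable g volume a b) :
    ∫ s in a..b, (∫ u in a..s, g u) * f s = ∫ u in a..b, g u * ∫ s in u..b, f s := by
  set μ := volume.restrict (Ioc a b)
  set F : ℝ → ℝ → ℝ := fun u s => if u < s then g u * f s else 0
  have hF : Integrable (Function.uncurry F) (μ.prod μ) := by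
    have : Function.uncurry F = {p : ℝ × ℝ | p.1 < p.2}.indicator (fun p => g p.1 * f p.2) := by
      ext p; simp [F, indicator, Function.uncurry]
    rw [this]
    exact (hg.1.mul_prod hf.1).indicator (measurableSet_lt measurable_fst measurable_snd)
  have hinner_u : ∀ s ∈ Ioc a b, ∫ u, F u s ∂μ = (∫ u in a..s, g u) * f s := by
    intro s hs
    have hslice : Iio s ∩ Ioc a b = Ioo a s := by
      ext u; simp only [mem_inter_iff, mem_Iio, mem_Ioc, mem_Ioo]
      exact ⟨fun h => ⟨h.2.1, h.1⟩, fun h => ⟨h.2, h.1, h.2.le.trans hs.2⟩⟩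
    have hFs : (fun u => F u s) = (Iio s).indicator (fun u => g u * f s) := by
      ext u; simp [F, indicator]
    rw [hFs, MeasureTheory.integral_indicator measurableSet_Iio,
      Measure.restrict_restrict measurableSet_Iio, hslice, MeasureTheory.integral_mul_const,
      intervalIntegral.integral_of_le hs.1.le, integral_Ioc_eq_integral_Ioo]
  have hinner_s : ∀ u ∈ Ioc a b, ∫ s, F u s ∂μ = g u * ∫ s in u..b, f s := by
    intro u hu
    have hslice : Ioi u ∩ Ioc a b = Ioc u b := by
      ext s; simp only [mem_inter_iff, mem_Ioi, mem_Ioc]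
      exact ⟨fun h => ⟨h.1, h.2.2⟩, fun h => ⟨h.1, hu.1.trans h.1, h.2⟩⟩
    have hFu : (fun s => F u s) = (Ioi u).indicator (fun s => g u * f s) := by
      ext s; simp [F, indicator]
    rw [hFu, MeasureTheory.integral_indicator measurableSet_Ioi,
      Measure.restrict_restrict measurableSet_Ioi, hslice, MeasureTheory.integral_const_mul,
      intervalIntegral.integral_of_le hu.2]
  calc ∫ s in a..b, (∫ u in a..s, g u) * f s
      = ∫ s, ∫ u, F u s ∂μ ∂μ := by
        rw [intervalIntegral.integral_of_le hab]
        exact setIntegral_congr_fun measurableSet_Ioc (fun s hs => (hinner_u s hs).symm)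
    _ = ∫ u, ∫ s, F u s ∂μ ∂μ := (integral_integral_swap hF).symm
    _ = ∫ u in a..b, g u * ∫ s in u..b, f s := by
        rw [intervalIntegral.integral_of_le hab]
        exact setIntegral_congr_fun measurableSet_Ioc hinner_s

theorem Real.rpow_sub_one_le_exp_one_mul_exp_neg {u x : ℝ} (hu : 0 ≤ u) (hx : 1 ≤ x) :
    u ^ (x - 1) ≤ exp 1 * exp (-(x * (1 - u))) := by
  calc u ^ (x - 1) ≤ exp (u - 1) ^ (x - 1) := by
        gcongr
        linarith [Real.add_one_le_exp (u - 1)]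
    _ = exp ((u - 1) * (x - 1)) := (Real.exp_mul _ _).symm
    _ ≤ exp (1 + -(x * (1 - u))) := by gcongr; nlinarith
    _ = exp 1 * exp (-(x * (1 - u))) := Real.exp_add _ _

theorem integral_mul_exp_neg_mul_rpow_add_one_le {β x : ℝ} (hβ : 0 ≤ β) (hx : 0 < x) :
    ∫ u in 0..1, x * (Real.exp (-(x * (1 - u))) * ((x * (1 - u)) ^ β + 1))
      ≤ Real.Gamma (β + 1) + 1 := by
  set F : ℝ → ℝ := fun v => Real.exp (-v) * (v ^ β + 1)
  have hΓ : IntegrableOn (fun v => Real.exp (-v) * v ^ β) (Ioi 0) := by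
    simpa using Real.GammaIntegral_convergent (s := β + 1) (by linarith)
  have hexp : IntegrableOn (fun v => Real.exp (-v)) (Ioi 0) := by
    simpa using exp_neg_integrableOn_Ioi 0 one_pos
  have hF : IntegrableOn F (Ioi 0) :=
    (hΓ.add hexp).congr_fun (fun v _ => by simp [F, mul_add]) measurableSet_Ioi
  have hsubst : ∫ u in 0..1, x * F (x * (1 - u)) = ∫ v in 0..x, F v := by
    simp_rw [mul_one_sub]
    rw [intervalIntegral.integral_const_mul, intervalIntegral.integral_comp_sub_mul F hx.ne',
      mul_one, sub_self, mul_zero, sub_zero, smul_eq_mul, mul_inv_cancel_left₀ hx.ne']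
  calc ∫ u in 0..1, x * F (x * (1 - u)) = ∫ v in 0..x, F v := hsubst
    _ ≤ ∫ v in Ioi 0, F v := by
        rw [intervalIntegral.integral_of_le hx.le]
        refine setIntegral_mono_set hF ?_ Ioc_subset_Ioi_self.eventuallyLE
        filter_upwards [ae_restrict_mem measurableSet_Ioi] with v hv
        have : (0:ℝ) < v := hv
        positivity
    _ = Real.Gamma (β + 1) + 1 := by
        simp_rw [F, mul_add, mul_one]
        rw [integral_add hΓ hexp, integral_exp_neg_Ioi_zero,
          Real.Gamma_eq_integral (by linarith), add_sub_cancel_right]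

theorem one_sub_one_div_mem_Ico {x : ℝ} (hx : 1 ≤ x) : 1 - 1 / x ∈ Ico (0:ℝ) 1 := by
  have : 0 < 1 / x := by positivity
  exact ⟨by rw [sub_nonneg, div_le_one (by linarith)]; exact hx, by linarith⟩

def TailDoubling (ω : ℝ → ℝ) (C β : ℝ) : Prop :=
  ∀ r t : ℝ, 0 ≤ r → r ≤ t → t < 1 → tl ω r ≤ C * ((1 - r) / (1 - t)) ^ β * tl ω t

section Weight

variable {ω : ℝ → ℝ}

theorem ae_nonneg_on_Icc (hnn : ∀ t ∈ Ico (0:ℝ) 1, 0 ≤ ω t) :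
    ∀ᵐ s, s ∈ Icc (0:ℝ) 1 → 0 ≤ ω s := by
  filter_upwards [Measure.ae_ne volume (1:ℝ)] with s hs1 hs
  exact hnn s ⟨hs.1, hs.2.lt_of_ne hs1⟩

theorem integral_nonneg_of_nonneg_on_Ico (hnn : ∀ t ∈ Ico (0:ℝ) 1, 0 ≤ ω t) {u v : ℝ}
    (hu : 0 ≤ u) (huv : u ≤ v) (hv : v ≤ 1) : 0 ≤ ∫ s in u..v, ω s := by
  refine intervalIntegral.integral_nonneg_of_ae_restrict huv ?_
  filter_upwards [ae_restrict_mem measurableSet_Icc, ae_restrict_of_ae (ae_nonneg_on_Icc hnn)]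
    with s hs hs'
  exact hs' ⟨hu.trans hs.1, hs.2.trans hv⟩

theorem tl_nonneg (hnn : ∀ t ∈ Ico (0:ℝ) 1, 0 ≤ ω t) {u : ℝ} (hu : u ∈ Icc (0:ℝ) 1) :
    0 ≤ tl ω u :=
  integral_nonneg_of_nonneg_on_Ico hnn hu.1 hu.2 le_rfl

theorem intervalIntegrable_of_integrableOn_Ico (hint : IntegrableOn ω (Ico (0:ℝ) 1)) {u v : ℝ}
    (hu : u ∈ Icc (0:ℝ) 1) (hv : v ∈ Icc (0:ℝ) 1) : IntervalIntegrable ω volume u v :=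
  (((integrableOn_Icc_iff_integrableOn_Ico).2 hint).mono_set
    (uIcc_subset_Icc hu hv)).intervalIntegrable

theorem antitoneOn_tl (hnn : ∀ t ∈ Ico (0:ℝ) 1, 0 ≤ ω t) (hint : IntegrableOn ω (Ico (0:ℝ) 1)) :
    AntitoneOn (tl ω) (Icc 0 1) := by
  intro u hu v hv huv
  have hsplit : tl ω u = (∫ s in u..v, ω s) + tl ω v :=
    (intervalIntegral.integral_add_adjacent_intervals
      (intervalIntegrable_of_integrableOn_Ico hint hu hv)
      (intervalIntegrable_of_integrableOn_Ico hint hv ⟨zero_le_one, le_rfl⟩)).symm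
  linarith [integral_nonneg_of_nonneg_on_Ico hnn hu.1 huv hv.2]

theorem continuousOn_tl (hint : IntegrableOn ω (Ico (0:ℝ) 1)) : ContinuousOn (tl ω) (Icc 0 1) := by
  have hω : IntegrableOn ω (uIcc 0 1) := by
    rw [uIcc_of_le zero_le_one]
    exact (integrableOn_Icc_iff_integrableOn_Ico).2 hint
  have h : ContinuousOn (tl ω) (uIcc 0 1) :=
    intervalIntegral.continuousOn_primitive_interval_left hω
  rwa [uIcc_of_le zero_le_one] at h

end Weight

section Moments

variable {ω : ℝ → ℝ}

theorem intervalIntegrable_rpow_mul (hint : IntegrableOn ω (Ico (0:ℝ) 1)) {x : ℝ} (hx : 0 ≤ x) :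
    IntervalIntegrable (fun s => s ^ x * ω s) volume 0 1 :=
  (intervalIntegrable_of_integrableOn_Ico hint (left_mem_Icc.2 zero_le_one)
    (right_mem_Icc.2 zero_le_one)).continuousOn_mul (Real.continuous_rpow_const hx).continuousOn

theorem integral_rpow_mul_eq_integral_mul_tl (hint : IntegrableOn ω (Ico (0:ℝ) 1)) {x : ℝ}
    (hx : 0 < x) : ∫ s in 0..1, s ^ x * ω s = ∫ u in 0..1, x * u ^ (x - 1) * tl ω u := by
  have hprimitive : ∀ s ∈ uIcc (0:ℝ) 1, ∫ u in 0..s, x * u ^ (x - 1) = s ^ x := by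
    intro s _
    rw [intervalIntegral.integral_const_mul, integral_rpow (Or.inl (by linarith)),
      sub_add_cancel, Real.zero_rpow hx.ne', sub_zero]
    field_simp
  calc ∫ s in 0..1, s ^ x * ω s = ∫ s in 0..1, (∫ u in 0..s, x * u ^ (x - 1)) * ω s :=
        intervalIntegral.integral_congr fun s hs => by simp only [hprimitive s hs]
    _ = ∫ u in 0..1, x * u ^ (x - 1) * tl ω u :=
        intervalIntegral.integral_primitive_mul_eq zero_le_one
          (intervalIntegrable_of_integrableOn_Ico hint (left_mem_Icc.2 zero_le_one)
            (right_mem_Icc.2 zero_le_one))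
          ((intervalIntegral.intervalIntegrable_rpow' (by linarith)).const_mul x)

theorem mul_tl_le_integral_rpow_mul (hnn : ∀ t ∈ Ico (0:ℝ) 1, 0 ≤ ω t)
    (hint : IntegrableOn ω (Ico (0:ℝ) 1)) {b x : ℝ} (hb : b ∈ Icc (0:ℝ) 1) (hx : 0 ≤ x) :
    b ^ x * tl ω b ≤ ∫ s in 0..1, s ^ x * ω s := by
  have hmoment := intervalIntegrable_rpow_mul hint hx
  have hω : IntervalIntegrable ω volume b 1 :=
    intervalIntegrable_of_integrableOn_Ico hint hb (right_mem_Icc.2 zero_le_one)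
  calc b ^ x * tl ω b = ∫ s in b..1, b ^ x * ω s := (intervalIntegral.integral_const_mul _ _).symm
    _ ≤ ∫ s in b..1, s ^ x * ω s := by
        refine intervalIntegral.integral_mono_ae_restrict hb.2 (hω.const_mul _)
          (hmoment.mono_set (uIcc_subset_uIcc_right (by simpa [uIcc_of_le zero_le_one] using hb)))
          ?_
        filter_upwards [ae_restrict_mem measurableSet_Icc,
          ae_restrict_of_ae (ae_nonneg_on_Icc hnn)] with s hs hs'
        exact mul_le_mul_of_nonneg_right (Real.rpow_le_rpow hb.1 hs.1 hx)
          (hs' ⟨hb.1.trans hs.1, hs.2⟩)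
    _ ≤ ∫ s in 0..1, s ^ x * ω s := by
        refine intervalIntegral.integral_mono_interval hb.1 hb.2 le_rfl ?_ hmoment
        filter_upwards [ae_restrict_mem measurableSet_Ioc,
          ae_restrict_of_ae (ae_nonneg_on_Icc hnn)] with s hs hs'
        exact mul_nonneg (Real.rpow_nonneg hs.1.le x) (hs' (Ioc_subset_Icc_self hs))

end Moments

section TailDoubling

variable {ω : ℝ → ℝ} {C β : ℝ}

theorem tl_le_mul_integral_rpow_mul (hnn : ∀ t ∈ Ico (0:ℝ) 1, 0 ≤ ω t)
    (hint : IntegrableOn ω (Ico (0:ℝ) 1)) (hC : 0 ≤ C) (h : TailDoubling ω C β) {x : ℝ}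
    (hx : 1 ≤ x) : tl ω (1 - 1 / x) ≤ 2 * C * 2 ^ β * ∫ s in 0..1, s ^ x * ω s := by
  have hx0 : 0 < x := by linarith
  have hε : 0 < 1 / (2 * x) := by positivity
  have hε_le : 1 / (2 * x) ≤ 1 / 2 := by gcongr; linarith
  set b := 1 - 1 / (2 * x) with hb_def
  have hb : b ∈ Icc (0:ℝ) 1 := ⟨by linarith, by linarith⟩
  have hdoubling : tl ω (1 - 1 / x) ≤ C * 2 ^ β * tl ω b := by
    have hratio : (1 - (1 - 1 / x)) / (1 - b) = 2 := by
      rw [hb_def]; field_simp; ring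
    have hab : 1 - 1 / x ≤ b := by
      have : 1 / (2 * x) ≤ 1 / x := by gcongr; linarith
      linarith
    have := h _ b (one_sub_one_div_mem_Ico hx).1 hab (by linarith)
    rwa [hratio] at this
  have hbx : 1 / 2 ≤ b ^ x := by
    have := one_add_mul_self_le_rpow_one_add (s := -(1 / (2 * x))) (by linarith) hx
    rwa [show 1 + x * -(1 / (2 * x)) = 1 / 2 by field_simp; ring, ← sub_eq_add_neg] at this
  have hwb := tl_nonneg hnn hb
  calc tl ω (1 - 1 / x) ≤ C * 2 ^ β * tl ω b := hdoubling
    _ ≤ C * 2 ^ β * (2 * (b ^ x * tl ω b)) := by gcongr; nlinarith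
    _ ≤ 2 * C * 2 ^ β * ∫ s in 0..1, s ^ x * ω s := by
        have := mul_tl_le_integral_rpow_mul hnn hint hb hx0.le
        rw [show C * 2 ^ β * (2 * (b ^ x * tl ω b)) = 2 * C * 2 ^ β * (b ^ x * tl ω b) by ring]
        gcongr

theorem tl_le_mul_rpow_add_one (hnn : ∀ t ∈ Ico (0:ℝ) 1, 0 ≤ ω t)
    (hint : IntegrableOn ω (Ico (0:ℝ) 1)) (hC : 1 ≤ C) (h : TailDoubling ω C β) {x u : ℝ}
    (hx : 1 ≤ x) (hu : u ∈ Icc (0:ℝ) 1) :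
    tl ω u ≤ C * tl ω (1 - 1 / x) * ((x * (1 - u)) ^ β + 1) := by
  have hx0 : 0 < x := by linarith
  set a := 1 - 1 / x with ha_def
  have ha : a ∈ Ico (0:ℝ) 1 := one_sub_one_div_mem_Ico hx
  have hwa := tl_nonneg hnn (Ico_subset_Icc_self ha)
  have hpow : 0 ≤ (x * (1 - u)) ^ β := Real.rpow_nonneg (by nlinarith [hu.2]) β
  rcases le_total u a with hua | hau
  · have hratio : (1 - u) / (1 - a) = x * (1 - u) := by
      rw [ha_def]; field_simp; ring
    calc tl ω u ≤ C * ((1 - u) / (1 - a)) ^ β * tl ω a := h u a hu.1 hua ha.2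
      _ ≤ C * tl ω a * ((x * (1 - u)) ^ β + 1) := by
          rw [hratio]; nlinarith [mul_nonneg (by linarith : (0:ℝ) ≤ C) hwa]
  · calc tl ω u ≤ tl ω a := antitoneOn_tl hnn hint (Ico_subset_Icc_self ha) hu hau
      _ ≤ C * tl ω a * ((x * (1 - u)) ^ β + 1) := by
          nlinarith [mul_nonneg (by linarith : (0:ℝ) ≤ C) hwa, mul_nonneg hwa hpow]

theorem integral_rpow_mul_le_mul_tl (hnn : ∀ t ∈ Ico (0:ℝ) 1, 0 ≤ ω t)
    (hint : IntegrableOn ω (Ico (0:ℝ) 1)) (hC : 1 ≤ C) (hβ : 0 ≤ β) (h : TailDoubling ω C β)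
    {x : ℝ} (hx : 1 ≤ x) :
    ∫ s in 0..1, s ^ x * ω s
      ≤ Real.exp 1 * C * (Real.Gamma (β + 1) + 1) * tl ω (1 - 1 / x) := by
  have hx0 : 0 < x := by linarith
  set W := tl ω (1 - 1 / x)
  have hW : 0 ≤ W := tl_nonneg hnn (Ico_subset_Icc_self (one_sub_one_div_mem_Ico hx))
  set K : ℝ → ℝ := fun u => x * (Real.exp (-(x * (1 - u))) * ((x * (1 - u)) ^ β + 1))
  have hpointwise : ∀ u ∈ Icc (0:ℝ) 1, x * u ^ (x - 1) * tl ω u ≤ Real.exp 1 * C * W * K u := by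
    intro u hu
    calc x * u ^ (x - 1) * tl ω u
        ≤ x * (Real.exp 1 * Real.exp (-(x * (1 - u)))) * (C * W * ((x * (1 - u)) ^ β + 1)) :=
          mul_le_mul (mul_le_mul_of_nonneg_left
            (Real.rpow_sub_one_le_exp_one_mul_exp_neg hu.1 hx) hx0.le)
            (tl_le_mul_rpow_add_one hnn hint hC h hx hu) (tl_nonneg hnn hu) (by positivity)
      _ = Real.exp 1 * C * W * K u := by ring
  have hleft : IntervalIntegrable (fun u => x * u ^ (x - 1) * tl ω u) volume 0 1 := by
    refine ContinuousOn.intervalIntegrable ?_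
    rw [uIcc_of_le zero_le_one]
    exact (continuous_const.mul (Real.continuous_rpow_const (by linarith))).continuousOn.mul
      (continuousOn_tl hint)
  have hK : Continuous K := by
    have := Real.continuous_rpow_const hβ
    fun_prop
  calc ∫ s in 0..1, s ^ x * ω s = ∫ u in 0..1, x * u ^ (x - 1) * tl ω u :=
        integral_rpow_mul_eq_integral_mul_tl hint hx0
    _ ≤ ∫ u in 0..1, Real.exp 1 * C * W * K u :=
        intervalIntegral.integral_mono_on zero_le_one hleft
          ((hK.intervalIntegrable 0 1).const_mul _) hpointwise
    _ = Real.exp 1 * C * W * ∫ u in 0..1, K u := intervalIntegral.integral_const_mul _ _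
    _ ≤ Real.exp 1 * C * W * (Real.Gamma (β + 1) + 1) := by
        gcongr
        exact integral_mul_exp_neg_mul_rpow_add_one_le hβ hx0
    _ = Real.exp 1 * C * (Real.Gamma (β + 1) + 1) * W := by ring

end TailDoubling

theorem stmt1_general (ω : ℝ → ℝ)
    (hnn : ∀ t ∈ Ico (0:ℝ) 1, 0 ≤ ω t)
    (hint : IntegrableOn ω (Ico (0:ℝ) 1))
    (C' : ℝ) (hC' : 1 ≤ C') (β : ℝ) (hβ : 0 < β)
    (h : ∀ r t : ℝ, 0 ≤ r → r ≤ t → t < 1 →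
      tl ω r ≤ C' * ((1 - r) / (1 - t)) ^ β * tl ω t) :
    ∃ c₁ > (0:ℝ), ∃ c₂ > (0:ℝ), ∀ x : ℝ, 1 ≤ x →
      c₁ * tl ω (1 - 1/x) ≤ (∫ s in (0:ℝ)..1, s ^ x * ω s) ∧
      (∫ s in (0:ℝ)..1, s ^ x * ω s) ≤ c₂ * tl ω (1 - 1/x) := by
  have hC0 : 0 < C' := by linarith
  have hΓ : 0 < Real.Gamma (β + 1) := Real.Gamma_pos_of_pos (by linarith)
  refine ⟨(2 * C' * 2 ^ β)⁻¹, by positivity, Real.exp 1 * C' * (Real.Gamma (β + 1) + 1),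
    by positivity, fun x hx => ⟨?_, integral_rpow_mul_le_mul_tl hnn hint hC' hβ.le h hx⟩⟩
  rw [inv_mul_le_iff₀ (by positivity)]
  exact tl_le_mul_integral_rpow_mul hnn hint hC0.le h hx

theorem stmt1 (ω : ℝ → ℝ)
    (hnn : ∀ t ∈ Ico (0:ℝ) 1, 0 ≤ ω t)
    (hint : IntegrableOn ω (Ico (0:ℝ) 1))
    (hpos : ∀ r ∈ Ico (0:ℝ) 1, 0 < tl ω r)
    (C' : ℝ) (hC' : 1 ≤ C') (β : ℝ) (hβ : 0 < β)
    (h : ∀ r t : ℝ, 0 ≤ r → r ≤ t → t < 1 →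
      tl ω r ≤ C' * ((1 - r) / (1 - t)) ^ β * tl ω t) :
    ∃ c₁ > (0:ℝ), ∃ c₂ > (0:ℝ), ∀ x : ℝ, 1 ≤ x →
      c₁ * tl ω (1 - 1/x) ≤ (∫ s in (0:ℝ)..1, s ^ x * ω s) ∧
      (∫ s in (0:ℝ)..1, s ^ x * ω s) ≤ c₂ * tl ω (1 - 1/x) :=
  stmt1_general ω hnn hint C' hC' β hβ h
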